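/- A linearly recursive integer sequence {f_n} with irreducible core polynomial C(X) = X^k - t_1 X^{k-1} - ... - t_k and generic initial conditions (f_0=1, f_{-1}=...=f_{-(k-1)}=0) is periodic (over Z, i.e., f_{n+c} = f_n for some c > 0 and all n) if and only if every complex root of C(X) is a root of unity. -/

import Mathlib

/-!
Over `ℚ` the recurrence says that `C(S)` kills the sequence `f`, where `S` is the left shift,
and `f (n + c) = f n` says that `S^c - 1` kills it. Since `C` is irreducible over `ℚ` (Gauss) and
`f ≠ 0`, a polynomial kills `f` exactly when `C` divides it. So `f` is periodic iff
`C ∣ X^c - 1` for some `c > 0`, and for an irreducible `C` this happens iff one, equivalently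
every, complex root of `C` is a root of unity.
-/

open Polynomial

section Shift

variable (R M : Type*) [CommSemiring R] [AddCommMonoid M] [Module R M]

noncomputable def seqShift : Module.End R (ℕ → M) := LinearMap.funLeft R M Nat.succ

variable {R M}

theorem seqShift_pow_apply (m : ℕ) (g : ℕ → M) (n : ℕ) : (seqShift R M ^ m) g n = g (n + m) := by
  induction m generalizing g n with
  | zero => rfl
  | succ m ih => rw [pow_succ, Module.End.mul_apply, ih]; rfl

end Shift

theorem aeval_seqShift_X_pow_sub_one_apply_eq_zero_iff {R M : Type*} [CommRing R]
    [AddCommGroup M] [Module R M] (c : ℕ) (g : ℕ → M) :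
    aeval (seqShift R M) (X ^ c - 1 : R[X]) g = 0 ↔ ∀ n, g (n + c) = g n := by
  simp [funext_iff, seqShift_pow_apply, sub_eq_zero]

theorem Irreducible.dvd_iff_aeval_apply_eq_zero {K V : Type*} [Field K] [AddCommGroup V]
    [Module K V] {φ : Module.End K V} {p q : K[X]} (hp : Irreducible p) {v : V} (hv : v ≠ 0)
    (hpv : aeval φ p v = 0) : p ∣ q ↔ aeval φ q v = 0 := by
  refine ⟨fun ⟨r, hr⟩ => ?_, fun hqv => hp.dvd_iff_not_isCoprime.2 fun ⟨a, b, hab⟩ => hv ?_⟩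
  · rw [hr, mul_comm, map_mul, Module.End.mul_apply, hpv, map_zero]
  · simpa [hpv, hqv] using congr(aeval φ $hab v).symm

theorem Irreducible.dvd_of_aeval_eq_zero {K L : Type*} [Field K] [CommRing L] [Nontrivial L]
    [Algebra K L] {p q : K[X]} (hp : Irreducible p) {z : L}
    (hpz : aeval z p = 0) (hqz : aeval z q = 0) : p ∣ q := by
  refine hp.dvd_iff_not_isCoprime.2 fun ⟨a, b, hab⟩ => one_ne_zero (α := L) ?_
  simpa [hpz, hqz] using congr(aeval z $hab).symm

theorem Irreducible.exists_dvd_X_pow_sub_one_iff {K : Type*} (L : Type*) [Field K] [Field L]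
    [IsAlgClosed L] [Algebra K L] {p : K[X]} (hp : Irreducible p) :
    (∃ c, 0 < c ∧ p ∣ X ^ c - 1) ↔ ∀ z : L, aeval z p = 0 → ∃ m, 0 < m ∧ z ^ m = 1 := by
  constructor
  · rintro ⟨c, hc, q, hq⟩ z hz
    refine ⟨c, hc, sub_eq_zero.1 ?_⟩
    simpa [hz] using congr(aeval z $hq)
  · intro hroots
    obtain ⟨z, hz⟩ := IsAlgClosed.exists_aeval_eq_zero L p (degree_pos_of_irreducible hp).ne'
    obtain ⟨m, hm, hzm⟩ := hroots z hz
    exact ⟨m, hm, hp.dvd_of_aeval_eq_zero hz (by simp [hzm])⟩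

section CorePoly

variable {R : Type*} [CommRing R] {k : ℕ}

noncomputable def corePoly (k : ℕ) (t : Fin k → R) : R[X] :=
  X ^ k - ∑ j : Fin k, C (t j) * X ^ (k - 1 - (j : ℕ))

theorem corePoly_monic (t : Fin k → R) : (corePoly k t).Monic := by
  refine monic_X_pow_sub <| (degree_sum_le _ _).trans_lt <|
    (Finset.sup_lt_iff (WithBot.bot_lt_coe k)).2 fun j _ => (degree_C_mul_X_pow_le _ _).trans_lt ?_
  exact Nat.cast_lt.2 (by have := j.2; omega)

theorem corePoly_map {S : Type*} [CommRing S] (φ : R →+* S) (t : Fin k → R) :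
    (corePoly k t).map φ = corePoly k (φ ∘ t) := by
  simp [corePoly, Polynomial.map_sub, Polynomial.map_sum]

theorem aeval_seqShift_corePoly_apply_eq_zero {t : Fin k → R} {g : ℕ → R}
    (hrec : ∀ n, k ≤ n → g n = ∑ j : Fin k, t j * g (n - 1 - (j : ℕ))) :
    aeval (seqShift R R) (corePoly k t) g = 0 := by
  funext n
  have hidx : ∀ j : Fin k, n + (k - 1 - (j : ℕ)) = n + k - 1 - j := fun j => by omega
  simp [corePoly, seqShift_pow_apply, hidx, hrec (n + k) (by omega)]

end CorePoly

theorem gfp_periodic_iff_roots_of_unity_general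
    (k : ℕ) (t : Fin k → ℤ)
    (hirr : Irreducible
      (Polynomial.X ^ k -
        ∑ j : Fin k, Polynomial.C (t j) * Polynomial.X ^ (k - 1 - (j : ℕ))))
    (f : ℕ → ℤ)
    (h1 : f (k - 1) = 1)
    (hrec : ∀ n, k ≤ n → f n = ∑ j : Fin k, t j * f (n - 1 - (j : ℕ))) :
    (∃ c : ℕ, 0 < c ∧ ∀ n, f (n + c) = f n) ↔
      ∀ z : ℂ,
        Polynomial.aeval z
            (Polynomial.X ^ k -
              ∑ j : Fin k, Polynomial.C (t j) * Polynomial.X ^ (k - 1 - (j : ℕ))) = 0 →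
          ∃ m : ℕ, 0 < m ∧ z ^ m = 1 := by
  set F : ℕ → ℚ := fun n => f n
  set P : ℚ[X] := corePoly k ((↑) ∘ t)
  have hP_map : (corePoly k t).map (algebraMap ℤ ℚ) = P := corePoly_map _ t
  have hP : Irreducible P := hP_map ▸
    (IsPrimitive.Int.irreducible_iff_irreducible_map_cast (corePoly_monic t).isPrimitive).1 hirr
  have hPF : aeval (seqShift ℚ ℚ) P F = 0 :=
    aeval_seqShift_corePoly_apply_eq_zero fun n hn => by simp [F, hrec n hn]
  have hF : F ≠ 0 := fun h => by simpa [F, h1] using congrFun h (k - 1)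
  have hperiod (c : ℕ) : (∀ n, f (n + c) = f n) ↔ P ∣ X ^ c - 1 := by
    rw [hP.dvd_iff_aeval_apply_eq_zero hF hPF, aeval_seqShift_X_pow_sub_one_apply_eq_zero_iff]
    simp [F]
  have hroots (z : ℂ) : aeval z (corePoly k t) = aeval z P := by
    rw [← hP_map, aeval_map_algebraMap]
  show _ ↔ ∀ z : ℂ, aeval z (corePoly k t) = 0 → _
  simp_rw [hperiod, hroots]
  exact hP.exists_dvd_X_pow_sub_one_iff ℂ

/-- a linearly recursive integer sequence with irreducible core
polynomial `C(X) = X^k - t_1 X^{k-1} - ... - t_k` and generic initial conditions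
is periodic over `ℤ` if and only if every complex root of `C` is a root of unity. -/
theorem gfp_periodic_iff_roots_of_unity
    (k : ℕ) (hk : 1 ≤ k) (t : Fin k → ℤ)
    (hirr : Irreducible
      (Polynomial.X ^ k -
        ∑ j : Fin k, Polynomial.C (t j) * Polynomial.X ^ (k - 1 - (j : ℕ))))
    (f : ℕ → ℤ)
    (h0 : ∀ j, j < k - 1 → f j = 0) (h1 : f (k - 1) = 1)
    (hrec : ∀ n, k ≤ n → f n = ∑ j : Fin k, t j * f (n - 1 - (j : ℕ))) :
    (∃ c : ℕ, 0 < c ∧ ∀ n, f (n + c) = f n) ↔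
      ∀ z : ℂ,
        Polynomial.aeval z
            (Polynomial.X ^ k -
              ∑ j : Fin k, Polynomial.C (t j) * Polynomial.X ^ (k - 1 - (j : ℕ))) = 0 →
          ∃ m : ℕ, 0 < m ∧ z ^ m = 1 :=
  gfp_periodic_iff_roots_of_unity_general k t hirr f h1 hrec
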